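/- Let k ≤ 4 and let C₁,…,C_k be pairwise disjoint maximal commuting Pauli classes in dimension d = 8. Then there is no maximal commuting Pauli class S such that every member of S is equal up to phase to a member of C₁ ∪ ⋯ ∪ C_k and S is not equal up to phase (as a set of operators) to any of C₁,…,C_k. -/

import Mathlib

open Matrix

noncomputable section

/-- Matrices on the Hilbert space of `n` qubits, with rows and columns indexed by
bit strings `Fin n → Fin 2`. -/
abbrev QMat (n : ℕ) := Matrix (Fin n → Fin 2) (Fin n → Fin 2) ℂ

/-- The single-qubit identity. -/
def pI : Matrix (Fin 2) (Fin 2) ℂ := 1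

/-- The single-qubit Pauli X. -/
def pX : Matrix (Fin 2) (Fin 2) ℂ := !![0, 1; 1, 0]

/-- The single-qubit Pauli Y. -/
def pY : Matrix (Fin 2) (Fin 2) ℂ := !![0, -Complex.I; Complex.I, 0]

/-- The single-qubit Pauli Z. -/
def pZ : Matrix (Fin 2) (Fin 2) ℂ := !![1, 0; 0, -1]

/-- The `n`-fold Kronecker product `W 0 ⊗ ⋯ ⊗ W (n-1)`, realized on indices
`Fin n → Fin 2`. -/
def kron (n : ℕ) (W : Fin n → Matrix (Fin 2) (Fin 2) ℂ) : QMat n :=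
  fun v w => ∏ j, W j (v j) (w j)

/-- `M` is an `n`-qubit Pauli operator: an `n`-fold Kronecker product of matrices
from `{I₂, X, Y, Z}`. -/
def IsPauliOp (n : ℕ) (M : QMat n) : Prop :=
  ∃ W : Fin n → Matrix (Fin 2) (Fin 2) ℂ,
    (∀ j, W j = pI ∨ W j = pX ∨ W j = pY ∨ W j = pZ) ∧ M = kron n W

/-- Two matrices are equal up to phase if one is a nonzero scalar multiple of the other. -/
def PhaseEq {m : Type*} (A B : Matrix m m ℂ) : Prop := ∃ c : ℂ, c ≠ 0 ∧ A = c • B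

/-- A maximal commuting Pauli class in dimension `d = 2 ^ n`: a set of `d - 1`
pairwise commuting non-identity `n`-qubit Pauli operators, pairwise distinct up to phase. -/
def IsMaxClass (n : ℕ) (C : Set (QMat n)) : Prop :=
  C.Finite ∧ C.ncard = 2 ^ n - 1 ∧
  (∀ U ∈ C, IsPauliOp n U ∧ U ≠ 1) ∧
  (∀ U ∈ C, ∀ V ∈ C, U * V = V * U) ∧
  (∀ U ∈ C, ∀ V ∈ C, U ≠ V → ¬ PhaseEq U V)

/-- Two classes are disjoint if no member of one is equal up to phase to a member of the other. -/
def ClassDisjoint {n : ℕ} (C D : Set (QMat n)) : Prop :=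
  ∀ U ∈ C, ∀ V ∈ D, ¬ PhaseEq U V

/-- Two classes are equal up to phase (as sets of operators). -/
def ClassPhaseEq {n : ℕ} (C D : Set (QMat n)) : Prop :=
  (∀ U ∈ C, ∃ V ∈ D, PhaseEq U V) ∧ (∀ V ∈ D, ∃ U ∈ C, PhaseEq U V)

/-- The standard Hermitian inner product on `ι → ℂ` (conjugate-linear in the first slot). -/
def cinner {ι : Type*} [Fintype ι] (x y : ι → ℂ) : ℂ :=
  ∑ k, (starRingEnd ℂ) (x k) * y k

/-!
Label the single-qubit Paulis `I, X, Y, Z` by `𝔽₂²` and a 3-qubit Pauli operator by a vector of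
`𝔽₂⁶`. Distinct Pauli operators are trace-orthogonal, so equality up to phase is equality of labels,
and two Pauli operators commute exactly when the symplectic form vanishes on their labels. A
maximal class therefore consists of the 7 nonzero vectors of a Lagrangian subspace `L` of `𝔽₂⁶`.

If a new class with subspace `L` were covered by classes with subspaces `Lᵢ`, the planes
`L ⊓ Lᵢ` would be proper subspaces of `L`, pairwise meeting only in `0`, and would cover the
7 nonzero vectors of `L`. Two 2-dimensional subspaces of a 3-dimensional space meet nontrivially,
so at most one `L ⊓ Lᵢ` contributes 3 nonzero vectors and the others at most 1 each: `7 ≤ k + 2`.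
-/

open Module Function

theorem LinearMap.BilinForm.span_le_orthogonal_span {R M : Type*} [CommRing R] [AddCommGroup M]
    [Module R M] {B : LinearMap.BilinForm R M} {S : Set M} (hS : ∀ x ∈ S, ∀ y ∈ S, B x y = 0) :
    Submodule.span R S ≤ B.orthogonal (Submodule.span R S) := by
  refine Submodule.span_le.mpr fun y hy => B.mem_orthogonal_iff.mpr fun x hx => ?_
  have : Submodule.span R S ≤ LinearMap.ker (B.flip y) :=
    Submodule.span_le.mpr fun x hx => hS x hx y hy
  exact this hx

theorem LinearMap.BilinForm.two_mul_finrank_le_of_le_orthogonal {K V : Type*} [Field K]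
    [AddCommGroup V] [Module K V] [FiniteDimensional K V] {B : LinearMap.BilinForm K V}
    (hB : B.SeparatingLeft) {W : Submodule K V} (hW : W ≤ B.orthogonal W) :
    2 * finrank K W ≤ finrank K V := by
  have hsum := B.finrank_add_finrank_orthogonal' W
  rw [LinearMap.separatingLeft_iff_ker_eq_bot.mp hB, inf_bot_eq, finrank_bot] at hsum
  have := Submodule.finrank_mono hW
  omega

theorem sum_two_pow_sub_one_le {k : ℕ} (d : Fin k → ℕ) (hd : ∀ i, d i ≤ 2)
    (hpair : Pairwise fun i j => d i + d j ≤ 3) : ∑ i, (2 ^ d i - 1) ≤ k + 2 := by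
  have hterm : ∀ i, d i ≤ 1 → 2 ^ d i - 1 ≤ 1 := fun i hi => by
    interval_cases h : d i <;> simp
  by_cases htwo : ∃ i₀, d i₀ = 2
  · obtain ⟨i₀, hi₀⟩ := htwo
    have hrest : ∀ i ∈ Finset.univ.erase i₀, 2 ^ d i - 1 ≤ 1 := fun i hi =>
      hterm i (by have := hpair (Finset.ne_of_mem_erase hi); omega)
    have := Finset.sum_le_card_nsmul _ _ _ hrest
    rw [← Finset.add_sum_erase _ _ (Finset.mem_univ i₀), hi₀]
    simp only [Finset.card_erase_of_mem (Finset.mem_univ i₀), Finset.card_univ, Fintype.card_fin,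
      smul_eq_mul, mul_one] at this
    have hk : 1 ≤ k := Fin.pos i₀
    omega
  · push Not at htwo
    have := Finset.sum_le_card_nsmul Finset.univ _ 1 fun i _ =>
      hterm i (by have := hd i; have := htwo i; omega)
    simp only [Finset.card_univ, Fintype.card_fin, smul_eq_mul, mul_one] at this
    omega

section ZModTwo

variable {V : Type*} [AddCommGroup V] [Module (ZMod 2) V] [FiniteDimensional (ZMod 2) V]

theorem Submodule.ncard_eq_two_pow_finrank (W : Submodule (ZMod 2) V) :
    (W : Set V).ncard = 2 ^ finrank (ZMod 2) W := by
  have : Finite V := Module.finite_of_finite (ZMod 2)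
  have := Fintype.ofFinite W
  rw [← Nat.card_coe_set_eq, SetLike.coe_sort_coe, Nat.card_eq_fintype_card,
    Module.card_eq_pow_finrank (K := ZMod 2), ZMod.card]

theorem Submodule.ncard_diff_zero (W : Submodule (ZMod 2) V) :
    ((W : Set V) \ {0}).ncard = 2 ^ finrank (ZMod 2) W - 1 := by
  have : Finite V := Module.finite_of_finite (ZMod 2)
  rw [Set.ncard_sdiff_singleton_of_mem W.zero_mem, W.ncard_eq_two_pow_finrank]

theorem Submodule.coe_eq_insert_zero_of_ncard {W : Submodule (ZMod 2) V} {n : ℕ}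
    (hW : finrank (ZMod 2) W ≤ n) {S : Set V} (hSW : S ⊆ W) (hS0 : 0 ∉ S)
    (hS : S.ncard = 2 ^ n - 1) : (W : Set V) = insert 0 S ∧ finrank (ZMod 2) W = n := by
  have : Finite V := Module.finite_of_finite (ZMod 2)
  have hsub : S ⊆ (W : Set V) \ {0} := fun x hx => ⟨hSW hx, fun h => hS0 (h ▸ hx)⟩
  have hle := Set.ncard_le_ncard hsub
  rw [W.ncard_diff_zero, hS] at hle
  have hpow : 2 ^ finrank (ZMod 2) W ≤ 2 ^ n := Nat.pow_le_pow_right two_pos hW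
  have hrank : finrank (ZMod 2) W = n := by
    have := Nat.one_le_two_pow (n := finrank (ZMod 2) W)
    exact Nat.pow_right_injective le_rfl (show 2 ^ finrank (ZMod 2) W = 2 ^ n by omega)
  refine ⟨?_, hrank⟩
  have heq : S = (W : Set V) \ {0} :=
    Set.eq_of_subset_of_ncard_le hsub (by rw [W.ncard_diff_zero, hS, hrank])
  rw [heq, Set.insert_sdiff_singleton, Set.insert_eq_of_mem W.zero_mem]

theorem Submodule.five_le_of_covers_of_finrank_eq_three {L : Submodule (ZMod 2) V}
    (hL : finrank (ZMod 2) L = 3) {k : ℕ} {M : Fin k → Submodule (ZMod 2) V} (hne : ∀ i, ¬ L ≤ M i)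
    (hdisj : Pairwise (Disjoint on M)) (hcover : ∀ x ∈ L, x ≠ 0 → ∃ i, x ∈ M i) : 5 ≤ k := by
  have : Finite V := Module.finite_of_finite (ZMod 2)
  obtain ⟨d, hd⟩ : ∃ d : Fin k → ℕ, ∀ i, finrank (ZMod 2) ↥(L ⊓ M i) = d i := ⟨_, fun _ => rfl⟩
  have hd2 : ∀ i, d i ≤ 2 := fun i => by
    have := Submodule.finrank_lt_finrank_of_lt
      (inf_le_left.lt_of_ne fun h => hne i (h ▸ inf_le_right) : L ⊓ M i < L)
    rw [hd] at this
    omega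
  have hpair : Pairwise fun i j => d i + d j ≤ 3 := fun i j hij => by
    have hbot : (L ⊓ M i) ⊓ (L ⊓ M j) = ⊥ :=
      disjoint_iff.mp ((hdisj hij).mono inf_le_right inf_le_right)
    have hsum := Submodule.finrank_sup_add_finrank_inf_eq (L ⊓ M i) (L ⊓ M j)
    have hsup := Submodule.finrank_mono
      (sup_le (inf_le_left : L ⊓ M i ≤ L) (inf_le_left : L ⊓ M j ≤ L))
    rw [hbot, finrank_bot, hd, hd] at hsum
    rw [hL] at hsup
    omega
  have hcount : 2 ^ 3 - 1 ≤ ∑ i, (2 ^ d i - 1) := by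
    have hsub : (L : Set V) \ {0} ⊆
        ⋃ i ∈ Finset.univ, ((L ⊓ M i : Submodule (ZMod 2) V) : Set V) \ {0} := by
      rintro x ⟨hxL, hx0⟩
      obtain ⟨i, hi⟩ := hcover x hxL hx0
      exact Set.mem_biUnion (Finset.mem_univ i) ⟨⟨hxL, hi⟩, hx0⟩
    have := (Set.ncard_le_ncard hsub).trans (Finset.set_ncard_biUnion_le _ _)
    simpa only [Submodule.ncard_diff_zero, hd, hL] using this
  have := sum_two_pow_sub_one_le d hd2 hpair
  omega

end ZModTwo

lemma PhaseEq.refl {m : Type*} (A : Matrix m m ℂ) : PhaseEq A A :=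
  ⟨1, one_ne_zero, (one_smul ℂ A).symm⟩

lemma ClassPhaseEq.refl {n : ℕ} (C : Set (QMat n)) : ClassPhaseEq C C :=
  ⟨fun U hU => ⟨U, hU, .refl U⟩, fun U hU => ⟨U, hU, .refl U⟩⟩

namespace PauliClass

section Kron

variable {n : ℕ}

lemma kron_mul (W W' : Fin n → Matrix (Fin 2) (Fin 2) ℂ) :
    kron n W * kron n W' = kron n (fun j => W j * W' j) := by
  ext v w
  simp only [kron, Matrix.mul_apply, Finset.prod_univ_sum, Fintype.piFinset_univ,
    Finset.prod_mul_distrib]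

lemma kron_smul (c : Fin n → ℂ) (W : Fin n → Matrix (Fin 2) (Fin 2) ℂ) :
    kron n (fun j => c j • W j) = (∏ j, c j) • kron n W := by
  ext v w
  simp [kron, Finset.prod_mul_distrib]

lemma trace_kron (W : Fin n → Matrix (Fin 2) (Fin 2) ℂ) :
    (kron n W).trace = ∏ j, (W j).trace := by
  simp only [Matrix.trace, Matrix.diag, kron, Finset.prod_univ_sum, Fintype.piFinset_univ]

lemma kron_one : kron n (fun _ => 1) = 1 := by
  ext v w
  by_cases h : v = w
  · subst h; simp [kron]
  · obtain ⟨j, hj⟩ := Function.ne_iff.mp h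
    simp [kron, Matrix.one_apply_ne h, Finset.prod_eq_zero (Finset.mem_univ j), hj]

end Kron

abbrev Label := ZMod 2 × ZMod 2

/-- The label `(a, b)` stands for `X^a Z^b` up to phase, so that `pauli1 p` and `pauli1 q`
anticommute exactly when `omega1 p q = 1`. -/
def pauli1 (p : Label) : Matrix (Fin 2) (Fin 2) ℂ :=
  if p = (0, 0) then pI else if p = (1, 0) then pX else if p = (1, 1) then pY else pZ

def omega1 (p q : Label) : ZMod 2 := p.1 * q.2 + q.1 * p.2

def commSign (x : ZMod 2) : ℂ := if x = 0 then 1 else -1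

lemma commSign_add (x y : ZMod 2) : commSign (x + y) = commSign x * commSign y := by
  have h : ∀ z : ZMod 2, z = 0 ∨ z = 1 := by decide
  rcases h x with rfl | rfl <;> rcases h y with rfl | rfl <;>
    simp [commSign, show (1 : ZMod 2) + 1 = 0 from rfl]

lemma commSign_sum {ι : Type*} (s : Finset ι) (f : ι → ZMod 2) :
    commSign (∑ i ∈ s, f i) = ∏ i ∈ s, commSign (f i) := by
  classical
  induction s using Finset.induction_on with
  | empty => simp [commSign]
  | insert i s hi ih => rw [Finset.sum_insert hi, Finset.prod_insert hi, commSign_add, ih]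

lemma label_cases (p : Label) : p = (0, 0) ∨ p = (1, 0) ∨ p = (1, 1) ∨ p = (0, 1) := by
  revert p; decide

lemma exists_pauli1_eq {W : Matrix (Fin 2) (Fin 2) ℂ} (hW : W = pI ∨ W = pX ∨ W = pY ∨ W = pZ) :
    ∃ p, pauli1 p = W := by
  rcases hW with rfl | rfl | rfl | rfl
  exacts [⟨(0, 0), rfl⟩, ⟨(1, 0), rfl⟩, ⟨(1, 1), rfl⟩, ⟨(0, 1), rfl⟩]

lemma pauli1_mul_self (p : Label) : pauli1 p * pauli1 p = 1 := by
  rcases label_cases p with rfl | rfl | rfl | rfl <;>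
  simp [pauli1, pI, pX, pY, pZ, Prod.ext_iff, Matrix.one_fin_two]

lemma pauli1_mul_comm (p q : Label) :
    pauli1 p * pauli1 q = commSign (omega1 p q) • (pauli1 q * pauli1 p) := by
  rcases label_cases p with rfl | rfl | rfl | rfl <;>
  rcases label_cases q with rfl | rfl | rfl | rfl <;>
  norm_num +decide [omega1, commSign, pauli1, pI, pX, pY, pZ, Prod.ext_iff, Matrix.mul_fin_two]

lemma trace_pauli1_mul (p q : Label) :
    (pauli1 p * pauli1 q).trace = if p = q then 2 else 0 := by
  rcases label_cases p with rfl | rfl | rfl | rfl <;>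
  rcases label_cases q with rfl | rfl | rfl | rfl <;>
  norm_num [pauli1, pI, pX, pY, pZ, Prod.ext_iff, Matrix.trace_fin_two, Matrix.mul_fin_two,
    Matrix.one_fin_two]

variable {n : ℕ}

def pauliOp (t : Fin n → Label) : QMat n := kron n (fun j => pauli1 (t j))

def symplecticForm (n : ℕ) : LinearMap.BilinForm (ZMod 2) (Fin n → Label) :=
  LinearMap.mk₂ (ZMod 2) (fun t s => ∑ j, omega1 (t j) (s j))
    (fun _ _ _ => by simp only [omega1, ← Finset.sum_add_distrib]; congr! 1; simp; ring)
    (fun _ _ _ => by simp only [omega1, smul_eq_mul, Finset.mul_sum]; congr! 1; simp; ring)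
    (fun _ _ _ => by simp only [omega1, ← Finset.sum_add_distrib]; congr! 1; simp; ring)
    (fun _ _ _ => by simp only [omega1, smul_eq_mul, Finset.mul_sum]; congr! 1; simp; ring)

lemma symplecticForm_apply (t s : Fin n → Label) :
    symplecticForm n t s = ∑ j, omega1 (t j) (s j) := rfl

lemma pauliOp_zero : pauliOp (0 : Fin n → Label) = 1 := kron_one

lemma pauliOp_mul (t s : Fin n → Label) :
    pauliOp t * pauliOp s = kron n (fun j => pauli1 (t j) * pauli1 (s j)) :=
  kron_mul _ _

lemma pauliOp_mul_self (t : Fin n → Label) : pauliOp t * pauliOp t = 1 := by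
  simp only [pauliOp_mul, pauli1_mul_self, kron_one]

lemma pauliOp_mul_comm (t s : Fin n → Label) :
    pauliOp t * pauliOp s = commSign (symplecticForm n t s) • (pauliOp s * pauliOp t) := by
  simp only [pauliOp_mul, pauli1_mul_comm (t _), kron_smul, symplecticForm_apply, commSign_sum]

lemma symplecticForm_eq_zero_of_commute {t s : Fin n → Label}
    (h : Commute (pauliOp t) (pauliOp s)) : symplecticForm n t s = 0 := by
  have hunit : pauliOp t * pauliOp s * (pauliOp s * pauliOp t) = 1 := by
    rw [mul_assoc, ← mul_assoc (pauliOp s), pauliOp_mul_self, one_mul, pauliOp_mul_self]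
  have hne : pauliOp t * pauliOp s ≠ 0 := fun h0 => by simp [h0] at hunit
  -- an invertible matrix cannot be its own negative
  by_contra hB
  have hflip := pauliOp_mul_comm t s
  rw [commSign, if_neg hB, neg_one_smul, ← h.eq] at hflip
  have htwo : (2 : ℂ) • (pauliOp t * pauliOp s) = 0 := by
    rw [two_smul]; nth_rewrite 2 [hflip]; exact add_neg_cancel _
  exact hne ((smul_eq_zero.mp htwo).resolve_left two_ne_zero)

lemma trace_pauliOp_mul (t s : Fin n → Label) :
    (pauliOp t * pauliOp s).trace = if t = s then 2 ^ n else 0 := by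
  simp only [pauliOp_mul, trace_kron, trace_pauli1_mul]
  split_ifs with h
  · simp [h]
  · obtain ⟨j, hj⟩ := Function.ne_iff.mp h
    exact Finset.prod_eq_zero (Finset.mem_univ j) (if_neg hj)

lemma phaseEq_pauliOp_iff {t s : Fin n → Label} : PhaseEq (pauliOp t) (pauliOp s) ↔ t = s := by
  refine ⟨fun ⟨c, hc, h⟩ => ?_, fun h => h ▸ .refl _⟩
  have htr := trace_pauliOp_mul s t
  rw [h, Matrix.mul_smul, Matrix.trace_smul, trace_pauliOp_mul, if_pos rfl, smul_eq_mul] at htr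
  by_contra hts
  rw [if_neg (Ne.symm hts)] at htr
  exact mul_ne_zero hc (pow_ne_zero n two_ne_zero) htr

lemma pauliOp_injective : Injective (pauliOp : (Fin n → Label) → QMat n) := fun _ _ h =>
  phaseEq_pauliOp_iff.mp (h ▸ .refl _)

lemma exists_pauliOp_eq {U : QMat n} (hU : IsPauliOp n U) : ∃ t, pauliOp t = U := by
  obtain ⟨W, hW, rfl⟩ := hU
  choose t ht using fun j => exists_pauli1_eq (hW j)
  exact ⟨t, congrArg (kron n) (funext ht)⟩

lemma symplecticForm_apply_single (t : Fin n → Label) (j : Fin n) (p : Label) :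
    symplecticForm n t (Pi.single j p) = omega1 (t j) p := by
  rw [symplecticForm_apply, Finset.sum_eq_single j (fun i _ hij => by simp [hij, omega1]) (by simp),
    Pi.single_eq_same]

lemma separatingLeft_symplecticForm : (symplecticForm n).SeparatingLeft := by
  intro t ht
  funext j
  have hZ := ht (Pi.single j (0, 1))
  have hX := ht (Pi.single j (1, 0))
  simp only [symplecticForm_apply_single, omega1] at hZ hX
  exact Prod.ext (by simpa using hZ) (by simpa using hX)

lemma finrank_fun_label : finrank (ZMod 2) (Fin n → Label) = 2 * n := by
  rw [finrank_pi_fintype, finrank_prod, finrank_self]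
  simp [mul_comm]

def labels (C : Set (QMat n)) : Set (Fin n → Label) := pauliOp ⁻¹' C

def lagrangian (C : Set (QMat n)) : Submodule (ZMod 2) (Fin n → Label) :=
  Submodule.span (ZMod 2) (labels C)

lemma mem_labels_of_phaseEq {D : Set (QMat n)} (hD : ∀ V ∈ D, IsPauliOp n V) {V : QMat n}
    (hV : V ∈ D) {t : Fin n → Label} (h : PhaseEq (pauliOp t) V) : t ∈ labels D := by
  obtain ⟨s, rfl⟩ := exists_pauliOp_eq (hD V hV)
  rwa [labels, Set.mem_preimage, phaseEq_pauliOp_iff.mp h]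

end PauliClass

namespace IsMaxClass

open PauliClass

variable {n : ℕ} {C D : Set (QMat n)}

lemma isPauliOp (hC : IsMaxClass n C) : ∀ U ∈ C, IsPauliOp n U := fun U hU => (hC.2.2.1 U hU).1

lemma image_labels (hC : IsMaxClass n C) : pauliOp '' labels C = C :=
  Set.image_preimage_eq_of_subset fun U hU => exists_pauliOp_eq (hC.isPauliOp U hU)

lemma ncard_labels (hC : IsMaxClass n C) : (labels C).ncard = 2 ^ n - 1 := by
  rw [← Set.ncard_image_of_injective _ pauliOp_injective, hC.image_labels, hC.2.1]

lemma zero_notMem_labels (hC : IsMaxClass n C) : 0 ∉ labels C :=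
  fun h0 => (hC.2.2.1 _ h0).2 pauliOp_zero

lemma finrank_lagrangian_le (hC : IsMaxClass n C) : finrank (ZMod 2) (lagrangian C) ≤ n := by
  have hiso : ∀ t ∈ labels C, ∀ s ∈ labels C, symplecticForm n t s = 0 :=
    fun t ht s hs => symplecticForm_eq_zero_of_commute (hC.2.2.2.1 _ ht _ hs)
  have := LinearMap.BilinForm.two_mul_finrank_le_of_le_orthogonal separatingLeft_symplecticForm
    (LinearMap.BilinForm.span_le_orthogonal_span hiso)
  rw [finrank_fun_label] at this
  exact Nat.le_of_mul_le_mul_left this two_pos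

lemma coe_lagrangian (hC : IsMaxClass n C) :
    (lagrangian C : Set (Fin n → Label)) = insert 0 (labels C) :=
  (Submodule.coe_eq_insert_zero_of_ncard hC.finrank_lagrangian_le Submodule.subset_span
    hC.zero_notMem_labels hC.ncard_labels).1

lemma finrank_lagrangian (hC : IsMaxClass n C) : finrank (ZMod 2) (lagrangian C) = n :=
  (Submodule.coe_eq_insert_zero_of_ncard hC.finrank_lagrangian_le Submodule.subset_span
    hC.zero_notMem_labels hC.ncard_labels).2

lemma mem_labels_of_mem_lagrangian (hC : IsMaxClass n C) {t : Fin n → Label}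
    (ht : t ∈ lagrangian C) (ht0 : t ≠ 0) : t ∈ labels C := by
  rw [← SetLike.mem_coe, hC.coe_lagrangian] at ht
  exact ht.resolve_left ht0

lemma eq_of_lagrangian_le (hC : IsMaxClass n C) (hD : IsMaxClass n D)
    (h : lagrangian C ≤ lagrangian D) : C = D := by
  have hL := Submodule.eq_of_le_of_finrank_eq h
    (hC.finrank_lagrangian.trans hD.finrank_lagrangian.symm)
  have hlabels : labels C = labels D := by
    have := congrArg (fun L : Submodule (ZMod 2) (Fin n → Label) => (L : Set (Fin n → Label)) \ {0})
      hL
    simpa [hC.coe_lagrangian, hD.coe_lagrangian, hC.zero_notMem_labels, hD.zero_notMem_labels]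
      using this
  rw [← hC.image_labels, ← hD.image_labels, hlabels]

lemma disjoint_lagrangian (hC : IsMaxClass n C) (hD : IsMaxClass n D) (h : ClassDisjoint C D) :
    Disjoint (lagrangian C) (lagrangian D) := by
  refine Submodule.disjoint_def.mpr fun t htC htD => ?_
  by_contra ht0
  exact h _ (hC.mem_labels_of_mem_lagrangian htC ht0) _
    (hD.mem_labels_of_mem_lagrangian htD ht0) (.refl _)

end IsMaxClass

open PauliClass

/-- For `k ≤ 4` pairwise disjoint maximal commuting Pauli classes in `d = 8`,
no further maximal commuting Pauli class can be formed, up to phase, out of the operators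
of `C 0 ∪ ⋯ ∪ C (k-1)`. -/
theorem no_extra_class_from_k_le_four_d8 (k : ℕ) (hk : k ≤ 4)
    (C : Fin k → Set (QMat 3))
    (hmax : ∀ i, IsMaxClass 3 (C i))
    (hdisj : ∀ i j, i ≠ j → ClassDisjoint (C i) (C j)) :
    ¬ ∃ T : Set (QMat 3), IsMaxClass 3 T ∧
        (∀ U ∈ T, ∃ i, ∃ V ∈ C i, PhaseEq U V) ∧
        (∀ i, ¬ ClassPhaseEq T (C i)) := by
  rintro ⟨T, hT, hcover, hne⟩
  have hfive : 5 ≤ k := Submodule.five_le_of_covers_of_finrank_eq_three hT.finrank_lagrangian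
    (M := fun i => lagrangian (C i))
    (fun i hle => hne i (hT.eq_of_lagrangian_le (hmax i) hle ▸ .refl T))
    (fun i j hij => (hmax i).disjoint_lagrangian (hmax j) (hdisj i j hij))
    (fun t ht ht0 => by
      obtain ⟨i, V, hV, htV⟩ := hcover _ (hT.mem_labels_of_mem_lagrangian ht ht0)
      exact ⟨i, Submodule.subset_span (mem_labels_of_phaseEq (hmax i).isPauliOp hV htV)⟩)
  omega
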